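/- arXiv:2112.00632 — 2 statements merged into one kernel-verified Lean document; each statement's English description precedes it below -/
import Mathlib

section
/- For every natural number n, the constant term of the Laurent polynomial (x + y + 1/(xy))^n in two variables equals (3d)!/(d!)^3 if n = 3d for some natural number d, and equals 0 otherwise. -/
/-!
Write `x + y + 1/(xy)` as the sum of the monomials with exponents `(1,0)`, `(0,1)`, `(-1,-1)`.
The multinomial theorem expands its `n`-th power over `k : Fin 3 → ℕ` with `∑ k = n`, the term
of `k` being the multinomial coefficient of `k` times the monomial with exponent
`(k 0 - k 2, k 1 - k 2)`. That monomial is constant iff all `k i` are equal, which forces `n = 3d`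
and leaves the single coefficient `(3d)!/(d!)³`.
-/

/-- The mirror of ℙ²: the Laurent polynomial `x + y + 1/(xy)`, modelled as an element
of the group algebra of `ℤ × ℤ` (exponent lattice) over `ℚ`. -/
noncomputable def mirrorP2 : AddMonoidAlgebra ℚ (ℤ × ℤ) :=
  AddMonoidAlgebra.single (1, 0) 1 + AddMonoidAlgebra.single (0, 1) 1 +
    AddMonoidAlgebra.single (-1, -1) 1

open Finset
open scoped Nat

namespace AddMonoidAlgebra

variable {ι R G : Type*} [DecidableEq ι] [CommSemiring R] [AddCommMonoid G]

theorem sum_single_one_pow (s : Finset ι) (v : ι → G) (n : ℕ) :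
    (∑ i ∈ s, single (v i) (1 : R)) ^ n =
      ∑ k ∈ s.piAntidiag n, single (∑ i ∈ s, k i • v i) (Nat.multinomial s k : R) := by
  rw [sum_pow_eq_sum_piAntidiag]
  refine sum_congr rfl fun k _ => ?_
  simp only [single_pow, one_pow, prod_single, prod_const_one, natCast_def, single_mul_single,
    zero_add, mul_one]

theorem coeff_sum_single_one_pow [DecidableEq G] (s : Finset ι) (v : ι → G) (n : ℕ) (g : G) :
    ((∑ i ∈ s, single (v i) (1 : R)) ^ n).coeff g =
      ∑ k ∈ s.piAntidiag n with ∑ i ∈ s, k i • v i = g, (Nat.multinomial s k : R) := by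
  simp only [sum_single_one_pow, coeff_sum, coeff_single, Finsupp.finsetSum_apply,
    Finsupp.single_apply, sum_filter]

end AddMonoidAlgebra

theorem Nat.cast_multinomial_univ_const {ι K : Type*} [Fintype ι] [Field K] [CharZero K] (d : ℕ) :
    (Nat.multinomial (univ : Finset ι) (fun _ => d) : K) =
      (Fintype.card ι * d)! / (d ! : K) ^ Fintype.card ι := by
  have := Nat.multinomial_spec (univ : Finset ι) (fun _ => d)
  simp only [prod_const, Finset.card_univ, sum_const, smul_eq_mul] at this
  rw [eq_div_iff (pow_ne_zero _ (Nat.cast_ne_zero.2 d.factorial_ne_zero)), ← this]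
  push_cast
  ring

def mirrorP2Exponent : Fin 3 → ℤ × ℤ := ![(1, 0), (0, 1), (-1, -1)]

theorem mirrorP2_eq_sum_single :
    mirrorP2 = ∑ i, AddMonoidAlgebra.single (mirrorP2Exponent i) 1 := by
  simp [mirrorP2, mirrorP2Exponent, Fin.sum_univ_three]

theorem sum_smul_mirrorP2Exponent (k : Fin 3 → ℕ) :
    ∑ i, k i • mirrorP2Exponent i = ((k 0 : ℤ) - k 2, (k 1 : ℤ) - k 2) := by
  ext <;> simp [mirrorP2Exponent, Fin.sum_univ_three] <;> ring

theorem filter_piAntidiag_sum_smul_mirrorP2Exponent_eq_zero (n : ℕ) :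
    {k ∈ (univ : Finset (Fin 3)).piAntidiag n | ∑ i, k i • mirrorP2Exponent i = 0} =
      if 3 ∣ n then {fun _ => n / 3} else ∅ := by
  ext k
  rw [mem_filter, mem_piAntidiag, sum_smul_mirrorP2Exponent, Fin.sum_univ_three]
  simp only [mem_univ, implies_true, and_true, Prod.mk_eq_zero, sub_eq_zero, Nat.cast_inj]
  split_ifs with h
  · simp only [mem_singleton, funext_iff, Fin.forall_fin_succ, Fin.succ_zero_eq_one,
      Fin.succ_one_eq_two, IsEmpty.forall_iff, and_true]
    omega
  · simp only [notMem_empty, iff_false]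
    omega

/-- The constant term of `(x + y + 1/(xy))^n` equals `(3d)!/(d!)³` if `n = 3d`,
and `0` otherwise. -/
theorem stmt2 (n : ℕ) :
    (mirrorP2 ^ n).coeff (0, 0) =
      if 3 ∣ n then (Nat.factorial n : ℚ) / ((Nat.factorial (n / 3) : ℚ) ^ 3) else 0 := by
  rw [mirrorP2_eq_sum_single, AddMonoidAlgebra.coeff_sum_single_one_pow, ← Prod.zero_eq_mk,
    filter_piAntidiag_sum_smul_mirrorP2Exponent_eq_zero]
  split_ifs with h
  · rw [sum_singleton, Nat.cast_multinomial_univ_const, Fintype.card_fin,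
      Nat.mul_div_cancel' h]
  · rfl
end

section
/- Let V be a finite-dimensional complex vector space of dimension r ≥ 1 and let T_1, …, T_s ∈ GL(V) satisfy T_1·T_2·…·T_s = id. If V has no nonzero vector fixed by all the T_i and no nonzero vector fixed by all the adjoints T_i^* (equivalently, the group generated by the T_i has no trivial sub- or quotient representation on V), then Σ_{i=1}^s dim(V / ker(T_i − id)) ≥ 2r. -/
/-!
Let `Pⱼ = T₀ ⋯ Tⱼ₋₁` be the partial products. The maps
`V → ∏ᵢ im(Tᵢ - 1) → V`, `v ↦ (Tᵢ v - v)ᵢ` and `(wᵢ)ᵢ ↦ ∑ᵢ Pᵢ wᵢ`, form a complex, because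
`Pᵢ (Tᵢ - 1) = Pᵢ₊₁ - Pᵢ` telescopes to `T₀ ⋯ Tₛ₋₁ - 1 = 0`. The first map is injective since
no nonzero vector is fixed by all `Tᵢ`. The second is surjective: a functional `φ` vanishing
on its image satisfies `φ ∘ Pᵢ₊₁ = φ ∘ Pᵢ`, so `φ` is `Pᵢ`-invariant for every `i`, hence
`Tᵢ`-invariant, hence zero. Counting dimensions gives `∑ᵢ rk(Tᵢ - 1) ≥ 2 dim V`.
-/

open Module LinearMap

theorem Module.finrank_add_finrank_le_of_comp_eq_zero {K U V W : Type*} [DivisionRing K]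
    [AddCommGroup U] [Module K U] [AddCommGroup V] [Module K V] [FiniteDimensional K V]
    [AddCommGroup W] [Module K W] {f : U →ₗ[K] V} {g : V →ₗ[K] W}
    (hf : Function.Injective f) (hg : Function.Surjective g) (hgf : g ∘ₗ f = 0) :
    finrank K U + finrank K W ≤ finrank K V := by
  have rank_nullity := finrank_range_add_finrank_ker g
  rw [range_eq_top.mpr hg, finrank_top] at rank_nullity
  have : finrank K U ≤ finrank K (ker g) :=
    finrank_range_of_inj hf ▸ Submodule.finrank_mono (range_le_ker_iff.mpr hgf)
  omega

theorem Fin.sum_univ_succ_sub_castSucc {M : Type*} [AddCommGroup M] :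
    ∀ {n : ℕ} (f : Fin (n + 1) → M), ∑ i : Fin n, (f i.succ - f i.castSucc) = f (last n) - f 0
  | 0, _ => by simp
  | n + 1, f => by
    rw [Fin.sum_univ_castSucc, ← succ_last, ← castSucc_zero]
    simp only [succ_castSucc]
    rw [sum_univ_succ_sub_castSucc (fun i => f i.castSucc)]
    abel

theorem Fin.partialProd_last {M : Type*} [Monoid M] {n : ℕ} (f : Fin n → M) :
    partialProd f (last n) = (List.ofFn f).prod := by
  simp [partialProd, List.take_of_length_le]

namespace Scott

variable {K V : Type*} [Field K] [AddCommGroup V] [Module K V] {s : ℕ} (T : Fin s → V ≃ₗ[K] V)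

def coboundary : V →ₗ[K] ∀ i, range ((T i).toLinearMap - LinearMap.id) :=
  pi fun i => ((T i).toLinearMap - LinearMap.id).rangeRestrict

def sumPartialProd : (∀ i, range ((T i).toLinearMap - LinearMap.id)) →ₗ[K] V :=
  ∑ i, (Fin.partialProd T i.castSucc).toLinearMap ∘ₗ (range _).subtype ∘ₗ proj i

theorem coboundary_injective (hsub : ∀ v : V, (∀ i, T i v = v) → v = 0) :
    Function.Injective (coboundary T) := by
  refine (injective_iff_map_eq_zero _).mpr fun v hv => hsub v fun i => ?_
  have := congrArg (fun w => (w i : V)) hv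
  simpa [coboundary, sub_eq_zero] using this

theorem sumPartialProd_comp_coboundary (hprod : (List.ofFn T).prod = 1) :
    sumPartialProd T ∘ₗ coboundary T = 0 := by
  ext v
  have telescope := Fin.sum_univ_succ_sub_castSucc fun j => Fin.partialProd T j v
  simp only [Fin.partialProd_succ, LinearEquiv.mul_apply, Fin.partialProd_last, hprod,
    Fin.partialProd_zero, sub_self] at telescope
  simpa [sumPartialProd, coboundary, LinearMap.sum_apply] using telescope

theorem sumPartialProd_single (i : Fin s) (w : range ((T i).toLinearMap - LinearMap.id)) :
    sumPartialProd T (Pi.single i w) = Fin.partialProd T i.castSucc w := by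
  rw [sumPartialProd, LinearMap.sum_apply, Finset.sum_eq_single i
    (fun j _ hj => by simp [Pi.single_eq_of_ne hj]) (by simp)]
  simp

theorem sumPartialProd_surjective
    (hquot : ∀ φ : Dual K V, (∀ i, φ.comp (T i).toLinearMap = φ) → φ = 0) :
    Function.Surjective (sumPartialProd T) := by
  refine dualMap_injective_iff.mp <| (injective_iff_map_eq_zero _).mpr fun φ hφ => hquot φ ?_
  have kills i (v : V) : φ (Fin.partialProd T i.castSucc (T i v - v)) = 0 := by
    simpa [sumPartialProd_single] using congrArg (· (Pi.single i ⟨T i v - v, v, rfl⟩)) hφ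
  have invariant (j : Fin (s + 1)) : φ ∘ₗ (Fin.partialProd T j).toLinearMap = φ := by
    induction j using Fin.induction with
    | zero => rfl
    | succ i ih =>
      ext v
      have := kills i v
      rw [map_sub, map_sub, sub_eq_zero] at this
      simp only [LinearMap.comp_apply, LinearEquiv.coe_coe, Fin.partialProd_succ,
        LinearEquiv.mul_apply, this]
      exact LinearMap.congr_fun ih v
  intro i
  ext v
  have h := LinearMap.congr_fun (invariant i.castSucc) (T i v - v)
  rw [LinearMap.comp_apply, LinearEquiv.coe_coe, kills i v, map_sub, eq_comm, sub_eq_zero] at h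
  exact h

end Scott

theorem stmt11_general (V : Type*) [AddCommGroup V] [Module ℂ V] [FiniteDimensional ℂ V]
    (s : ℕ) (T : Fin s → (V ≃ₗ[ℂ] V))
    (hprod : (List.ofFn T).prod = 1)
    (hsub : ∀ v : V, (∀ i, T i v = v) → v = 0)
    (hquot : ∀ φ : Module.Dual ℂ V, (∀ i, φ.comp (T i).toLinearMap = φ) → φ = 0) :
    2 * Module.finrank ℂ V ≤
      ∑ i : Fin s,
        Module.finrank ℂ (V ⧸ LinearMap.ker ((T i).toLinearMap - LinearMap.id)) := by
  have key := finrank_add_finrank_le_of_comp_eq_zero (Scott.coboundary_injective T hsub)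
    (Scott.sumPartialProd_surjective T hquot) (Scott.sumPartialProd_comp_coboundary T hprod)
  simp only [finrank_pi_fintype, quotKerEquivRange _ |>.finrank_eq] at key ⊢
  omega

/-- Scott's lemma: if `T₁,…,T_s` are invertible linear maps on a finite-dimensional
complex vector space `V` of dimension `r ≥ 1` with `T₁·T₂⋯T_s = id`, and `V` has no
nonzero vector fixed by all the `Tᵢ` and no nonzero linear functional fixed by all the
`Tᵢ` (no trivial sub- or quotient representation), then
`Σᵢ dim(V / ker(Tᵢ − id)) ≥ 2r`. -/
theorem stmt11 (V : Type*) [AddCommGroup V] [Module ℂ V] [FiniteDimensional ℂ V]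
    (hr : 1 ≤ Module.finrank ℂ V) (s : ℕ) (T : Fin s → (V ≃ₗ[ℂ] V))
    (hprod : (List.ofFn T).prod = 1)
    (hsub : ∀ v : V, (∀ i, T i v = v) → v = 0)
    (hquot : ∀ φ : Module.Dual ℂ V, (∀ i, φ.comp (T i).toLinearMap = φ) → φ = 0) :
    2 * Module.finrank ℂ V ≤
      ∑ i : Fin s,
        Module.finrank ℂ (V ⧸ LinearMap.ker ((T i).toLinearMap - LinearMap.id)) :=
  stmt11_general V s T hprod hsub hquot
end
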